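/- arXiv:1803.00926 — 2 statements merged into one kernel-verified Lean document; each statement's English description precedes it below -/
import Mathlib

section
/- Let r ≥ 1 and let P = {±e_1, ..., ±e_r} ⊂ ℝ^r, where e_1,...,e_r is the standard basis. In any optimal 2-means clustering of P (partition into two sets A, B minimizing Σ_{x∈A}‖x−μ(A)‖² + Σ_{x∈B}‖x−μ(B)‖², where μ denotes the centroid), for every i ∈ [r], exactly one of e_i, −e_i belongs to A and the other belongs to B. -/
noncomputable def centroid5 {r : ℕ} (A : Finset (EuclideanSpace ℝ (Fin r))) :
    EuclideanSpace ℝ (Fin r) := (A.card : ℝ)⁻¹ • ∑ x ∈ A, x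

noncomputable def cost5 {r : ℕ} (A : Finset (EuclideanSpace ℝ (Fin r))) : ℝ :=
  ∑ x ∈ A, ‖x - centroid5 A‖ ^ 2


open Finset

lemma cost5_eq' {r : ℕ} (A : Finset (EuclideanSpace ℝ (Fin r))) :
    (∑ x ∈ A, ‖x - ((A.card : ℝ)⁻¹ • ∑ y ∈ A, y)‖ ^ 2) =
      (∑ x ∈ A, ‖x‖ ^ 2) - (A.card : ℝ)⁻¹ * ‖∑ x ∈ A, x‖ ^ 2 := by
  set n : ℝ := (A.card : ℝ) with hn
  set S : EuclideanSpace ℝ (Fin r) := ∑ y ∈ A, y with hS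
  have hexp : ∀ x : EuclideanSpace ℝ (Fin r),
      ‖x - n⁻¹ • S‖ ^ 2 = ‖x‖ ^ 2 - 2 * (n⁻¹ * @inner ℝ _ _ x S) + n⁻¹ ^ 2 * ‖S‖ ^ 2 := by
    intro x
    rw [norm_sub_sq_real, real_inner_smul_right, norm_smul]
    rw [Real.norm_eq_abs, mul_pow, sq_abs]
  rw [Finset.sum_congr rfl fun x _ => hexp x]
  rw [Finset.sum_add_distrib, Finset.sum_sub_distrib, ← Finset.mul_sum, ← Finset.mul_sum,
    ← sum_inner, ← hS, real_inner_self_eq_norm_sq, Finset.sum_const, nsmul_eq_mul, ← hn]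
  have h : n * (n⁻¹ ^ 2 * ‖S‖ ^ 2) = n⁻¹ * ‖S‖ ^ 2 := by
    rcases eq_or_ne n 0 with h | h
    · simp [h]
    · field_simp
  rw [h]
  ring

lemma key_ineq5 (s t n m : ℝ) (hs : 0 ≤ s) (ht : 0 ≤ t) (htm : t ≤ m) (hn : 2 ≤ n) :
    (n - 1) - (n - 1)⁻¹ * (s + 1) + ((m + 1) - (m + 1)⁻¹ * (t + 1)) <
      n - n⁻¹ * s + (m - m⁻¹ * t) := by
  have hm0 : 0 ≤ m := le_trans ht htm
  have hn1 : (0 : ℝ) < n - 1 := by linarith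
  have hnpos : (0 : ℝ) < n := by linarith
  have h1 : n⁻¹ * s < (n - 1)⁻¹ * (s + 1) := by
    have ha : n⁻¹ * s ≤ (n - 1)⁻¹ * s :=
      mul_le_mul_of_nonneg_right (by
        apply inv_anti₀ hn1; linarith) hs
    have hb : (n - 1)⁻¹ * s < (n - 1)⁻¹ * (s + 1) := by
      have := inv_pos.mpr hn1
      nlinarith
    linarith
  have h2 : m⁻¹ * t ≤ (m + 1)⁻¹ * (t + 1) := by
    rcases eq_or_lt_of_le hm0 with h | h
    · have ht0 : t = 0 := le_antisymm (by linarith [htm, h]) ht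
      rw [ht0, ← h]
      simp
    · have hm1 : (0:ℝ) < m + 1 := by linarith
      rw [inv_mul_eq_div, inv_mul_eq_div, div_le_div_iff₀ h hm1]
      nlinarith
  linarith

open RealInnerProductSpace in
lemma ips5 {r : ℕ} (j k : Fin r) :
    ⟪(EuclideanSpace.single j (1:ℝ)), (EuclideanSpace.single k (1:ℝ))⟫
      = if j = k then 1 else 0 := by
  rw [EuclideanSpace.inner_single_left]
  simp [EuclideanSpace.single_apply, eq_comm]

open RealInnerProductSpace in
lemma swap_lt5 {r : ℕ} [DecidableEq (EuclideanSpace ℝ (Fin r))]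
    (e : Fin r → EuclideanSpace ℝ (Fin r))
    (he : e = fun i => EuclideanSpace.single i (1 : ℝ))
    (P A B : Finset (EuclideanSpace ℝ (Fin r)))
    (hP : P = Finset.image e Finset.univ ∪ Finset.image (fun i => -e i) Finset.univ)
    (hunion : A ∪ B = P) (hdisj : Disjoint A B) (i : Fin r)
    (h1 : e i ∈ A) (h2 : -e i ∈ A) :
    cost5 (A.erase (-e i)) + cost5 (insert (-e i) B) < cost5 A + cost5 B := by
  have cost5_eq : ∀ C : Finset (EuclideanSpace ℝ (Fin r)),
      cost5 C = (∑ x ∈ C, ‖x‖ ^ 2) - (C.card : ℝ)⁻¹ * ‖∑ x ∈ C, x‖ ^ 2 := by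
    intro C; rw [cost5, centroid5]; exact cost5_eq' C
  have hAP : A ⊆ P := hunion ▸ Finset.subset_union_left
  have hBP : B ⊆ P := hunion ▸ Finset.subset_union_right
  have hmem : ∀ x ∈ P, ∃ j, x = e j ∨ x = -e j := by
    intro x hx
    rw [hP, Finset.mem_union] at hx
    rcases hx with hx | hx <;> simp only [Finset.mem_image, Finset.mem_univ, true_and] at hx <;>
      obtain ⟨j, hj⟩ := hx
    · exact ⟨j, Or.inl hj.symm⟩
    · exact ⟨j, Or.inr hj.symm⟩
  have hnorm1 : ∀ x ∈ P, ‖x‖ = 1 := by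
    intro x hx
    obtain ⟨j, hj | hj⟩ := hmem x hx <;> subst hj <;> simp [he]
  have hips : ∀ j k : Fin r, ⟪e j, e k⟫ = if j = k then 1 else 0 := by
    intro j k; subst he; exact ips5 j k
  have h11 : ⟪e i, e i⟫ = 1 := by rw [hips i i]; simp
  have hnormei : ‖e i‖ = 1 := by simp [he]
  have hne : e i ≠ -e i := by
    intro h
    have h2' : ⟪e i, -e i⟫ = -1 := by rw [inner_neg_right, h11]
    rw [← h, h11] at h2'
    norm_num at h2'
  have hinner0 : ∀ x ∈ P, x ≠ e i → x ≠ -e i → ⟪x, e i⟫ = 0 := by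
    intro x hx hx1 hx2
    obtain ⟨j, hj | hj⟩ := hmem x hx <;> subst hj
    · have hji : j ≠ i := fun h => hx1 (by rw [h])
      rw [hips j i]; simp [hji]
    · have hji : j ≠ i := fun h => hx2 (by rw [h])
      rw [inner_neg_left, hips j i]; simp [hji]
  have hinner_le : ∀ x ∈ P, ∀ y ∈ P, x ≠ y → ⟪x, y⟫ ≤ 0 := by
    intro x hx y hy hxy
    obtain ⟨j, hj | hj⟩ := hmem x hx <;> obtain ⟨k, hk | hk⟩ := hmem y hy <;> subst hj <;>
        subst hk
    · have hjk : j ≠ k := fun h => hxy (by rw [h])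
      rw [hips j k]; simp [hjk]
    · rw [inner_neg_right, hips j k]
      split_ifs <;> norm_num
    · rw [inner_neg_left, hips j k]
      split_ifs <;> norm_num
    · have hjk : j ≠ k := fun h => hxy (by rw [h])
      rw [inner_neg_neg, hips j k]; simp [hjk]
  set S := ∑ x ∈ A, x with hS
  set T := ∑ x ∈ B, x with hT
  have h2B : -e i ∉ B := fun h => (Finset.disjoint_left.mp hdisj h2) h
  have h1B : e i ∉ B := fun h => (Finset.disjoint_left.mp hdisj h1) h
  have hSi : ⟪S, e i⟫ = 0 := by
    rw [hS, sum_inner, ← Finset.add_sum_erase _ _ h1]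
    have hmem2 : -e i ∈ A.erase (e i) := Finset.mem_erase.mpr ⟨hne.symm, h2⟩
    rw [← Finset.add_sum_erase _ _ hmem2]
    rw [Finset.sum_eq_zero fun x hx => hinner0 x
      (hAP (Finset.mem_of_mem_erase (Finset.mem_of_mem_erase hx)))
      (Finset.ne_of_mem_erase (Finset.mem_of_mem_erase hx))
      (Finset.ne_of_mem_erase hx)]
    rw [inner_neg_left, h11]
    ring
  have hTi : ⟪T, e i⟫ = 0 := by
    rw [hT, sum_inner]
    exact Finset.sum_eq_zero fun x hx => hinner0 x (hBP hx)
      (fun h => h1B (h ▸ hx)) (fun h => h2B (h ▸ hx))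
  have hcardA : 2 ≤ A.card := Finset.one_lt_card.mpr ⟨e i, h1, -e i, h2, hne⟩
  have hsq : ∀ C : Finset (EuclideanSpace ℝ (Fin r)), C ⊆ P →
      ∑ x ∈ C, ‖x‖ ^ 2 = (C.card : ℝ) := by
    intro C hC
    rw [Finset.sum_congr rfl fun x hx => by rw [hnorm1 x (hC hx), one_pow]]
    simp
  have hsumA' : ∑ x ∈ A.erase (-e i), x = S + e i := by
    rw [Finset.sum_erase_eq_sub h2, ← hS, sub_neg_eq_add]
  have hsumB' : ∑ x ∈ insert (-e i) B, x = T - e i := by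
    rw [Finset.sum_insert h2B, ← hT, neg_add_eq_sub]
  have hcardA' : ((A.erase (-e i)).card : ℝ) = (A.card : ℝ) - 1 := by
    rw [Finset.card_erase_of_mem h2, Nat.cast_sub (by omega)]
    norm_num
  have hcardB' : (((insert (-e i) B).card : ℝ)) = (B.card : ℝ) + 1 := by
    rw [Finset.card_insert_of_notMem h2B]
    push_cast; ring
  have hnS' : ‖S + e i‖ ^ 2 = ‖S‖ ^ 2 + 1 := by
    rw [norm_add_sq_real, hSi, hnormei]; ring
  have hnT' : ‖T - e i‖ ^ 2 = ‖T‖ ^ 2 + 1 := by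
    rw [norm_sub_sq_real, hTi, hnormei]; ring
  have hTle : ‖T‖ ^ 2 ≤ (B.card : ℝ) := by
    have h0 : ‖T‖ ^ 2 = ∑ x ∈ B, ⟪x, T⟫ := by
      rw [← real_inner_self_eq_norm_sq, hT, sum_inner]
    rw [h0]
    calc ∑ x ∈ B, ⟪x, T⟫ ≤ ∑ x ∈ B, (1 : ℝ) := by
          apply Finset.sum_le_sum
          intro x hx
          rw [hT, inner_sum, ← Finset.add_sum_erase _ _ hx]
          have hxx : ⟪x, x⟫ = 1 := by
            rw [real_inner_self_eq_norm_sq, hnorm1 x (hBP hx)]; norm_num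
          have hrest : ∑ y ∈ B.erase x, ⟪x, y⟫ ≤ 0 :=
            Finset.sum_nonpos fun y hy => hinner_le x (hBP hx) y
              (hBP (Finset.mem_of_mem_erase hy)) (Finset.ne_of_mem_erase hy).symm
          linarith [hxx, hrest]
      _ = (B.card : ℝ) := by simp
  have hS0 : (0:ℝ) ≤ ‖S‖ ^ 2 := sq_nonneg _
  have hT0 : (0:ℝ) ≤ ‖T‖ ^ 2 := sq_nonneg _
  have hn2 : (2:ℝ) ≤ (A.card : ℝ) := by exact_mod_cast hcardA
  have key := key_ineq5 (‖S‖ ^ 2) (‖T‖ ^ 2) (A.card : ℝ) (B.card : ℝ) hS0 hT0 hTle hn2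
  have eqA : cost5 A = (A.card : ℝ) - ((A.card : ℝ))⁻¹ * ‖S‖ ^ 2 := by
    rw [cost5_eq, hsq A hAP, ← hS]
  have eqB : cost5 B = (B.card : ℝ) - ((B.card : ℝ))⁻¹ * ‖T‖ ^ 2 := by
    rw [cost5_eq, hsq B hBP, ← hT]
  have eqA' : cost5 (A.erase (-e i)) =
      ((A.card : ℝ) - 1) - ((A.card : ℝ) - 1)⁻¹ * (‖S‖ ^ 2 + 1) := by
    rw [cost5_eq, hsq _ ((Finset.erase_subset _ _).trans hAP), hsumA', hnS', hcardA']
  have eqB' : cost5 (insert (-e i) B) =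
      ((B.card : ℝ) + 1) - ((B.card : ℝ) + 1)⁻¹ * (‖T‖ ^ 2 + 1) := by
    rw [cost5_eq, hsq _ (Finset.insert_subset (hAP h2) hBP), hsumB', hnT', hcardB']
  linarith [key, eqA, eqB, eqA', eqB']

theorem stmt_5 (r : ℕ) [DecidableEq (EuclideanSpace ℝ (Fin r))] (hr : 1 ≤ r)
    (e : Fin r → EuclideanSpace ℝ (Fin r))
    (he : e = fun i => EuclideanSpace.single i (1 : ℝ))
    (P : Finset (EuclideanSpace ℝ (Fin r)))
    (hP : P = Finset.image e Finset.univ ∪ Finset.image (fun i => -e i) Finset.univ)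
    (A B : Finset (EuclideanSpace ℝ (Fin r)))
    (hunion : A ∪ B = P) (hdisj : Disjoint A B)
    (hopt : ∀ A' B' : Finset (EuclideanSpace ℝ (Fin r)),
      A' ∪ B' = P → Disjoint A' B' → cost5 A + cost5 B ≤ cost5 A' + cost5 B') :
    ∀ i : Fin r, (e i ∈ A ∧ -e i ∈ B) ∨ (e i ∈ B ∧ -e i ∈ A) := by
  intro i
  have hei : e i ∈ P := by rw [hP]; exact Finset.mem_union_left _ (Finset.mem_image_of_mem _ (Finset.mem_univ i))
  have hnei : -e i ∈ P := by
    rw [hP]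
    exact Finset.mem_union_right _ (Finset.mem_image.mpr ⟨i, Finset.mem_univ i, rfl⟩)
  have hei2 : e i ∈ A ∨ e i ∈ B := Finset.mem_union.mp (hunion ▸ hei)
  have hnei2 : -e i ∈ A ∨ -e i ∈ B := Finset.mem_union.mp (hunion ▸ hnei)
  rcases hei2 with hA | hB <;> rcases hnei2 with hA' | hB'
  · -- both in A : contradiction
    exfalso
    have hsw := swap_lt5 e he P A B hP hunion hdisj i hA hA'
    have hun' : (A.erase (-e i)) ∪ insert (-e i) B = P := by
      rw [← hunion]
      ext x
      by_cases hx : x = -e i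
      · simp [hx, hA']
      · simp [hx, Finset.mem_erase, Finset.mem_union, Finset.mem_insert]
    have hdj' : Disjoint (A.erase (-e i)) (insert (-e i) B) := by
      rw [Finset.disjoint_left]
      intro a ha hb
      rw [Finset.mem_insert] at hb
      rcases hb with rfl | hb
      · exact (Finset.mem_erase.mp ha).1 rfl
      · exact Finset.disjoint_left.mp hdisj (Finset.mem_of_mem_erase ha) hb
    exact absurd (hopt _ _ hun' hdj') (not_le.mpr hsw)
  · exact Or.inl ⟨hA, hB'⟩
  · exact Or.inr ⟨hB, hA'⟩
  · -- both in B : contradiction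
    exfalso
    have hsw := swap_lt5 e he P B A hP (by rw [Finset.union_comm]; exact hunion) hdisj.symm i hB hB'
    have hun' : (B.erase (-e i)) ∪ insert (-e i) A = P := by
      rw [← hunion]
      ext x
      by_cases hx : x = -e i
      · simp [hx, hB']
      · simp [hx, Finset.mem_erase, Finset.mem_union, Finset.mem_insert]
        tauto
    have hdj' : Disjoint (B.erase (-e i)) (insert (-e i) A) := by
      rw [Finset.disjoint_left]
      intro a ha hb
      rw [Finset.mem_insert] at hb
      rcases hb with rfl | hb
      · exact (Finset.mem_erase.mp ha).1 rfl
      · exact Finset.disjoint_left.mp hdisj hb (Finset.mem_of_mem_erase ha)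
    have := hopt _ _ hun' hdj'
    linarith
end

section
/- Let ε, δ ∈ (0,1), let m ≥ 1/(ε·δ), and let S = (p_1,...,p_m) be i.i.d. uniform samples from a finite nonempty set C ⊂ ℝ^r. Then with probability at least 1 − δ, ‖μ(S) − μ(C)‖² ≤ ε · cost(C, μ(C))/|C|, where μ(S) is the sample mean and μ(C) the centroid of C. -/
lemma pair_sum {α : Type*} (m : ℕ) (C : Finset α) (v w : α → ℝ) (i j : Fin m) :
    ∑ p ∈ Fintype.piFinset (fun _ : Fin m => C), v (p i) * w (p j)
      = if i = j then (C.card:ℝ)^(m-1) * ∑ x ∈ C, v x * w x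
        else (C.card:ℝ)^(m-2) * (∑ x ∈ C, v x) * (∑ x ∈ C, w x) := by
  have key : ∀ F : Fin m → α → ℝ,
      (∏ l, ∑ x ∈ C, F l x) = ∑ p ∈ Fintype.piFinset (fun _ : Fin m => C), ∏ l, F l (p l) :=
    fun F => Finset.prod_univ_sum _ _
  set F : Fin m → α → ℝ := fun l x => (if l = i then v x else 1) * (if l = j then w x else 1) with hF
  have hprod : ∀ p : Fin m → α, (∏ l, F l (p l)) = v (p i) * w (p j) := by
    intro p
    have : (∏ l, F l (p l)) = (∏ l, if l = i then v (p l) else 1) * (∏ l, if l = j then w (p l) else 1) := by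
      rw [← Finset.prod_mul_distrib]
    rw [this]
    simp [Finset.prod_ite_eq']
  have hL : ∑ p ∈ Fintype.piFinset (fun _ : Fin m => C), v (p i) * w (p j)
      = ∏ l, ∑ x ∈ C, F l x := by
    rw [key]; exact Finset.sum_congr rfl fun p _ => (hprod p).symm
  rw [hL]
  by_cases hij : i = j
  · subst hij
    simp only [if_pos rfl]
    have h1 : ∀ l, (∑ x ∈ C, F l x) = if l = i then ∑ x ∈ C, v x * w x else (C.card : ℝ) := by
      intro l; by_cases h : l = i <;> simp [hF, h]
    rw [Finset.prod_congr rfl (fun l _ => h1 l),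
        ← Finset.mul_prod_erase Finset.univ _ (Finset.mem_univ i)]
    rw [if_pos rfl, Finset.prod_congr rfl (fun l hl => if_neg (Finset.ne_of_mem_erase hl)),
        Finset.prod_const]
    have : (Finset.univ.erase i).card = m - 1 := by
      rw [Finset.card_erase_of_mem (Finset.mem_univ i), Finset.card_univ, Fintype.card_fin]
    rw [this, mul_comm]; simp
  · rw [if_neg hij]
    have h1 : ∀ l, (∑ x ∈ C, F l x)
        = if l = i then ∑ x ∈ C, v x else if l = j then ∑ x ∈ C, w x else (C.card : ℝ) := by
      intro l
      by_cases h : l = i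
      · subst h; simp [hF, hij]
      · have hji : ¬ (j = i) := fun hh => hij hh.symm
        by_cases h2 : l = j <;> simp [hF, h, h2, hji]
    rw [Finset.prod_congr rfl (fun l _ => h1 l),
        ← Finset.mul_prod_erase Finset.univ _ (Finset.mem_univ i), if_pos rfl]
    have hjmem : j ∈ Finset.univ.erase i := Finset.mem_erase.2 ⟨Ne.symm hij, Finset.mem_univ j⟩
    rw [← Finset.mul_prod_erase _ _ hjmem, if_neg (Ne.symm hij), if_pos rfl]
    have heq : ∀ l ∈ (Finset.univ.erase i).erase j,
        (if l = i then ∑ x ∈ C, v x else if l = j then ∑ x ∈ C, w x else (C.card : ℝ)) = (C.card:ℝ) := by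
      intro l hl
      rw [if_neg (Finset.ne_of_mem_erase (Finset.mem_of_mem_erase hl)), if_neg (Finset.ne_of_mem_erase hl)]
    rw [Finset.prod_congr rfl heq, Finset.prod_const]
    have : ((Finset.univ.erase i).erase j).card = m - 2 := by
      rw [Finset.card_erase_of_mem hjmem, Finset.card_erase_of_mem (Finset.mem_univ i),
          Finset.card_univ, Fintype.card_fin]
      omega
    rw [this]; ring

lemma var_sum {α : Type*} (m : ℕ) (C : Finset α) (u : α → ℝ)
    (hu : ∑ x ∈ C, u x = 0) :
    ∑ p ∈ Fintype.piFinset (fun _ : Fin m => C), (∑ i, u (p i))^2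
      = m * (C.card:ℝ)^(m-1) * ∑ x ∈ C, (u x)^2 := by
  have expand : ∀ p : Fin m → α, (∑ i, u (p i))^2 = ∑ i, ∑ j, u (p i) * u (p j) := by
    intro p; rw [sq, Finset.sum_mul_sum]
  calc ∑ p ∈ Fintype.piFinset (fun _ : Fin m => C), (∑ i, u (p i))^2
      = ∑ i, ∑ j, ∑ p ∈ Fintype.piFinset (fun _ : Fin m => C), u (p i) * u (p j) := by
        rw [Finset.sum_congr rfl (fun p _ => expand p)]
        rw [Finset.sum_comm]
        exact Finset.sum_congr rfl fun i _ => Finset.sum_comm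
    _ = ∑ i : Fin m, ((C.card:ℝ)^(m-1) * ∑ x ∈ C, (u x)^2) := by
        refine Finset.sum_congr rfl fun i _ => ?_
        rw [Finset.sum_congr rfl (fun j _ => pair_sum m C u u i j)]
        simp [hu, Finset.sum_ite_eq, sq]
    _ = m * (C.card:ℝ)^(m-1) * ∑ x ∈ C, (u x)^2 := by
        rw [Finset.sum_const, Finset.card_univ, Fintype.card_fin, nsmul_eq_mul]; ring

lemma norm_sq_eq_sum (r : ℕ) (x : EuclideanSpace ℝ (Fin r)) : ‖x‖^2 = ∑ k, (x k)^2 := by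
  rw [EuclideanSpace.norm_eq, Real.sq_sqrt (by positivity)]
  simp [sq]

set_option maxHeartbeats 1000000 in
theorem stmt_10 (r m : ℕ) (ε δ : ℝ) (hε : ε ∈ Set.Ioo (0:ℝ) 1) (hδ : δ ∈ Set.Ioo (0:ℝ) 1)
    (hm : (1 : ℝ) / (ε * δ) ≤ m)
    (C : Finset (EuclideanSpace ℝ (Fin r))) (hC : C.Nonempty)
    (μC : EuclideanSpace ℝ (Fin r)) (hμC : μC = (C.card : ℝ)⁻¹ • ∑ x ∈ C, x)
    (Ω : Finset (Fin m → EuclideanSpace ℝ (Fin r)))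
    (hΩ : Ω = Fintype.piFinset (fun _ : Fin m => C)) :
    ((Ω.filter (fun f => ‖((m : ℝ)⁻¹ • ∑ i, f i) - μC‖ ^ 2
        ≤ ε * (∑ x ∈ C, ‖x - μC‖ ^ 2) / C.card)).card : ℝ)
      ≥ (1 - δ) * Ω.card := by
  obtain ⟨hε0, hε1⟩ := hε
  obtain ⟨hδ0, hδ1⟩ := hδ
  have hN0 : 0 < C.card := Finset.card_pos.2 hC
  have hNR : (0:ℝ) < C.card := by exact_mod_cast hN0
  have hmR : (1:ℝ) < m := by
    have : (1:ℝ) < 1 / (ε * δ) := by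
      rw [lt_div_iff₀ (by positivity)]
      nlinarith
    linarith
  have hm0 : 0 < m := by exact_mod_cast Nat.pos_of_ne_zero (by rintro rfl; norm_num at hmR)
  have hmR0 : (0:ℝ) < m := by exact_mod_cast hm0
  -- centroid coordinate fact
  have hμk : ∀ k : Fin r, ∑ x ∈ C, (x k - μC k) = 0 := by
    intro k
    have h1 : μC k = (C.card:ℝ)⁻¹ * ∑ x ∈ C, x k := by
      rw [hμC]
      show (C.card:ℝ)⁻¹ * (∑ x ∈ C, x) k = _
      rw [WithLp.ofLp_sum, Finset.sum_apply]
    rw [Finset.sum_sub_distrib, Finset.sum_const, h1, nsmul_eq_mul]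
    field_simp
    ring
  -- value rewriting
  have hval : ∀ p : Fin m → EuclideanSpace ℝ (Fin r),
      ‖((m : ℝ)⁻¹ • ∑ i, p i) - μC‖ ^ 2
        = ((m:ℝ)⁻¹)^2 * ∑ k, (∑ i, (p i k - μC k))^2 := by
    intro p
    have h1 : ((m : ℝ)⁻¹ • ∑ i, p i) - μC = (m:ℝ)⁻¹ • ∑ i, (p i - μC) := by
      rw [Finset.sum_sub_distrib, smul_sub, Finset.sum_const, Finset.card_univ,
        Fintype.card_fin]
      congr 1
      rw [← Nat.cast_smul_eq_nsmul ℝ, smul_smul, inv_mul_cancel₀ (by positivity), one_smul]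
    rw [h1, norm_smul, mul_pow, Real.norm_eq_abs, sq_abs, norm_sq_eq_sum]
    congr 1
    refine Finset.sum_congr rfl fun k _ => ?_
    congr 1
    rw [WithLp.ofLp_sum, Finset.sum_apply]
    rfl
  set V : ℝ := ∑ x ∈ C, ‖x - μC‖ ^ 2 with hVdef
  have hV0 : 0 ≤ V := by positivity
  -- total sum (expectation * card)
  have hT : ∑ p ∈ Ω, ‖((m : ℝ)⁻¹ • ∑ i, p i) - μC‖ ^ 2 = (C.card:ℝ)^(m-1) * V / m := by
    rw [hΩ, Finset.sum_congr rfl (fun p _ => hval p), ← Finset.mul_sum, Finset.sum_comm]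
    have h2 : ∀ k : Fin r, ∑ p ∈ Fintype.piFinset (fun _ : Fin m => C),
        (∑ i, (p i k - μC k))^2 = m * (C.card:ℝ)^(m-1) * ∑ x ∈ C, (x k - μC k)^2 :=
      fun k => var_sum m C (fun x => x k - μC k) (hμk k)
    rw [Finset.sum_congr rfl (fun k _ => h2 k), ← Finset.mul_sum, Finset.sum_comm]
    have h3 : ∑ x ∈ C, ∑ k, (x k - μC k)^2 = V := by
      rw [hVdef]
      refine Finset.sum_congr rfl fun x _ => ?_
      rw [norm_sq_eq_sum]
      rfl
    rw [h3]
    field_simp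
  set t : ℝ := ε * V / C.card with htdef
  set P : (Fin m → EuclideanSpace ℝ (Fin r)) → Prop :=
    fun f => ‖((m : ℝ)⁻¹ • ∑ i, f i) - μC‖ ^ 2 ≤ ε * (∑ x ∈ C, ‖x - μC‖ ^ 2) / C.card
    with hP
  have hsplit := Finset.card_filter_add_card_filter_not (s := Ω) P
  set Bad := Ω.filter (fun f => ¬ P f) with hBad
  have hBadsum : (Bad.card : ℝ) * t ≤ ∑ p ∈ Bad, ‖((m : ℝ)⁻¹ • ∑ i, p i) - μC‖ ^ 2 := by
    have := Finset.card_nsmul_le_sum Bad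
      (fun p => ‖((m : ℝ)⁻¹ • ∑ i, p i) - μC‖ ^ 2) t ?_
    · rwa [nsmul_eq_mul] at this
    · intro p hp
      rw [hBad, Finset.mem_filter] at hp
      exact le_of_lt (lt_of_not_ge hp.2)
  have hsumT : ∑ p ∈ Bad, ‖((m : ℝ)⁻¹ • ∑ i, p i) - μC‖ ^ 2
      ≤ (C.card:ℝ)^(m-1) * V / m := by
    rw [← hT]
    exact Finset.sum_le_sum_of_subset_of_nonneg (Finset.filter_subset _ _)
      (fun p _ _ => by positivity)
  have hΩcard : (Ω.card : ℝ) = (C.card:ℝ)^m := by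
    rw [hΩ, Fintype.card_piFinset]
    push_cast
    simp
  have hBadle : (Bad.card : ℝ) ≤ δ * (C.card:ℝ)^m := by
    rcases eq_or_lt_of_le hV0 with hV | hV
    · -- V = 0 : Bad is empty
      have hBadempty : Bad = ∅ := by
        by_contra hne
        have hne' : Bad.Nonempty := Finset.nonempty_iff_ne_empty.2 hne
        have hpos : 0 < ∑ p ∈ Bad, ‖((m : ℝ)⁻¹ • ∑ i, p i) - μC‖ ^ 2 := by
          refine Finset.sum_pos (fun p hp => ?_) hne'
          rw [hBad, Finset.mem_filter] at hp
          have := lt_of_not_ge hp.2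
          have ht0 : ε * (∑ x ∈ C, ‖x - μC‖ ^ 2) / C.card = 0 := by
            rw [← hVdef, ← hV]; ring
          rw [ht0] at this
          exact this
        have : ∑ p ∈ Bad, ‖((m : ℝ)⁻¹ • ∑ i, p i) - μC‖ ^ 2 ≤ 0 := by
          refine hsumT.trans ?_
          rw [← hV]
          simp
        linarith
      rw [hBadempty]
      simp only [Finset.card_empty, Nat.cast_zero]
      exact mul_nonneg (le_of_lt hδ0) (le_of_lt (pow_pos hNR m))
    · -- V > 0
      have ht0 : 0 < t := by rw [htdef]; exact div_pos (mul_pos hε0 hV) hNR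
      have h4 : 1 ≤ (m:ℝ) * (ε * δ) := by
        rw [div_le_iff₀ (by positivity)] at hm
        linarith
      have hNm : (C.card:ℝ)^m = (C.card:ℝ)^(m-1) * C.card := by
        rw [← pow_succ]
        congr 1
        omega
      have key : (Bad.card:ℝ) * t ≤ (δ * (C.card:ℝ)^m) * t := by
        refine (hBadsum.trans hsumT).trans ?_
        have heq : δ * (C.card:ℝ)^m * t = δ * ε * V * (C.card:ℝ)^(m-1) := by
          rw [htdef, hNm]
          have hN' : (C.card:ℝ) ≠ 0 := ne_of_gt hNR
          calc δ * ((C.card:ℝ)^(m-1) * C.card) * (ε * V / C.card)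
              = δ * ε * V * (C.card:ℝ)^(m-1) * (C.card / C.card) := by ring
            _ = δ * ε * V * (C.card:ℝ)^(m-1) := by rw [div_self hN', mul_one]
        rw [heq, div_le_iff₀ hmR0]
        nlinarith [mul_le_mul_of_nonneg_left h4
          (le_of_lt (mul_pos (pow_pos hNR (m-1)) hV))]
      exact le_of_mul_le_mul_right key ht0
  -- conclude
  have hGood : ((Ω.filter P).card : ℝ) = (Ω.card : ℝ) - Bad.card := by
    rw [hBad]
    push_cast [← hsplit]
    ring
  rw [ge_iff_le, hGood, hΩcard]
  nlinarith [pow_pos hNR m]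
end
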